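/- arXiv:2211.03322 — 2 statements merged into one kernel-verified Lean document; each statement's English description precedes it below -/
import Mathlib

section
/- Let G be a simple graph and let V = V_1 ⊔ V_2 ⊔ … ⊔ V_k be a partition of its vertex set, and set G_i = G[V_i] for 1 ≤ i ≤ k. Then Σ_{i=1}^k (pcr(G_i) + bds(G_i)) ≤ pcr(G) + bds(G). -/
open scoped BigOperators

/-- A drawing of a simple graph in the plane: vertices are distinct points, each edge is a
simple continuous curve joining its endpoints, not passing through any other vertex point;
two distinct edge curves share only finitely many points, and no three edge curves pass
through a common interior point. -/
structure Drawing {V : Type*} (G : SimpleGraph V) where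
  pos : V → ℝ × ℝ
  pos_inj : Function.Injective pos
  curve : G.edgeSet → ℝ → ℝ × ℝ
  curve_cont : ∀ e, ContinuousOn (curve e) (Set.Icc 0 1)
  curve_inj : ∀ e, Set.InjOn (curve e) (Set.Icc 0 1)
  curve_ends : ∀ e : G.edgeSet, ∃ u v : V, (e : Sym2 V) = s(u, v) ∧
    curve e 0 = pos u ∧ curve e 1 = pos v
  curve_avoid : ∀ (e : G.edgeSet), ∀ t ∈ Set.Ioo (0:ℝ) 1, curve e t ∉ Set.range pos
  curve_finite_inter : ∀ e f : G.edgeSet, e ≠ f →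
    (curve e '' Set.Icc 0 1 ∩ curve f '' Set.Icc 0 1).Finite
  no_triple_point : ∀ e f g : G.edgeSet, e ≠ f → f ≠ g → e ≠ g → ∀ p : ℝ × ℝ,
    ¬ (p ∈ curve e '' Set.Ioo 0 1 ∧ p ∈ curve f '' Set.Ioo 0 1 ∧ p ∈ curve g '' Set.Ioo 0 1)

namespace Drawing

variable {V : Type*} {G : SimpleGraph V} (D : Drawing G)

/-- `p` is a crossing point of the edges `e` and `f`: a common interior point of their curves. -/
def IsCross (e f : G.edgeSet) (p : ℝ × ℝ) : Prop :=
  p ∈ D.curve e '' Set.Ioo 0 1 ∧ p ∈ D.curve f '' Set.Ioo 0 1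

/-- The set of crossings of a drawing, recorded as (unordered pair of edges, crossing point). -/
def crossings : Set (Sym2 G.edgeSet × (ℝ × ℝ)) :=
  { x | ∃ e f : G.edgeSet, e ≠ f ∧ x.1 = s(e, f) ∧ D.IsCross e f x.2 }

/-- The number of crossings of a drawing. -/
noncomputable def numCrossings : ℕ := D.crossings.ncard

/-- The set of unordered pairs of distinct edges that cross each other. -/
def crossingPairs : Set (Sym2 G.edgeSet) :=
  { q | ∃ e f : G.edgeSet, e ≠ f ∧ q = s(e, f) ∧ ∃ p, D.IsCross e f p }

/-- The number of pairs of edges that cross each other. -/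
noncomputable def numCrossingPairs : ℕ := D.crossingPairs.ncard

/-- An edge participating in at least one crossing. -/
def CrossingEdge (e : G.edgeSet) : Prop :=
  ∃ f : G.edgeSet, e ≠ f ∧ ∃ p, D.IsCross e f p

/-- A drawing is straight-line if every edge is the line segment between its endpoints. -/
def IsStraightLine : Prop :=
  ∀ (e : G.edgeSet), ∀ t ∈ Set.Icc (0:ℝ) 1,
    D.curve e t = D.curve e 0 + t • (D.curve e 1 - D.curve e 0)

/-- A convex drawing: the vertices are in convex position and edges are straight segments. -/
def IsConvex : Prop :=
  ConvexIndependent ℝ D.pos ∧ D.IsStraightLine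

end Drawing

/-- The crossing number of a graph. -/
noncomputable def crNum {V : Type*} (G : SimpleGraph V) : ℕ :=
  sInf { n | ∃ D : Drawing G, D.numCrossings = n }

/-- The pair crossing number of a graph. -/
noncomputable def pcrNum {V : Type*} (G : SimpleGraph V) : ℕ :=
  sInf { n | ∃ D : Drawing G, D.numCrossingPairs = n }

/-- The sum of the squares of the degrees of a graph. -/
noncomputable def ssqd {V : Type*} (G : SimpleGraph V) : ℕ :=
  ∑ᶠ v : V, ((G.neighborSet v).ncard) ^ 2

/-- The sum over all vertices of (degree choose 2). -/
noncomputable def bds {V : Type*} (G : SimpleGraph V) : ℕ :=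
  ∑ᶠ v : V, ((G.neighborSet v).ncard).choose 2

/-!
`pcrNum G` is an infimum over drawings, hence `0` when `G` has no drawing, so the first task is
to draw every countable graph: put the vertices at distinct integers on the `x`-axis and draw
each edge as the graph of a trapezoid of its own height whose slanted sides have width at
most `1/4`. Two such graphs are piecewise affine without a common affine piece, so they meet
finitely often. Above the axis, at most one of three edges through a point is at its flat top,
and two slanted sides can only meet there if they rise from the same vertex with the same
slope, i.e. the edges have the same height.

A drawing `D` of `G` restricts along `G[V_i] ↪ G` to a drawing of `G[V_i]` whose crossing pairs
inject into those of `D`; for distinct parts these images are disjoint, since their edges have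
disjoint vertex sets. Taking `D` optimal gives `Σ pcr(G_i) ≤ pcr(G)`, and `Σ bds(G_i) ≤ bds(G)`
holds because degrees can only drop in an induced subgraph.
-/

open Set SimpleGraph
open scoped Function

lemma Sym2.exists_eq_mk_lt {α β : Type*} [LinearOrder β] {f : α → β} (hf : Function.Injective f)
    {z : Sym2 α} (hz : ¬z.IsDiag) : ∃ u v, z = s(u, v) ∧ f u < f v := by
  induction z using Sym2.ind with
  | _ u v =>
    rcases (hf.ne (Sym2.mk_isDiag_iff.not.mp hz)).lt_or_gt with h | h
    · exact ⟨u, v, rfl, h⟩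
    · exact ⟨v, u, Sym2.eq_swap, h⟩

lemma Sym2.exists_eq_mk_of_map_eq_mk {α β : Type*} {f : α → β} {z : Sym2 α} {u v : β}
    (h : z.map f = s(u, v)) : ∃ u' v', z = s(u', v') ∧ f u' = u ∧ f v' = v := by
  induction z using Sym2.ind with
  | _ u' v' =>
    rcases Sym2.eq_iff.1 h with ⟨rfl, rfl⟩ | ⟨rfl, rfl⟩
    · exact ⟨u', v', rfl, rfl, rfl⟩
    · exact ⟨v', u', Sym2.eq_swap, rfl, rfl⟩

lemma Sym2.disjoint_range_map {α β γ : Type*} {f : α → γ} {g : β → γ}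
    (h : Disjoint (range f) (range g)) : Disjoint (range (Sym2.map f)) (range (Sym2.map g)) := by
  rw [Set.disjoint_left]
  rintro _ ⟨z, rfl⟩ ⟨z', hz'⟩
  induction z using Sym2.ind with
  | _ u v =>
    have hu : f u ∈ z'.map g := by rw [hz']; exact Sym2.mem_mk_left _ _
    obtain ⟨w, -, hw⟩ := Sym2.mem_map.1 hu
    exact h.ne_of_mem ⟨u, rfl⟩ ⟨w, rfl⟩ hw.symm

lemma SimpleGraph.Embedding.disjoint_range_mapEdgeSet {V W W' : Type*} {G : SimpleGraph V}
    {H : SimpleGraph W} {H' : SimpleGraph W'} {φ : H ↪g G} {ψ : H' ↪g G}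
    (h : Disjoint (range φ) (range ψ)) :
    Disjoint (range φ.mapEdgeSet) (range ψ.mapEdgeSet) := by
  rw [Set.disjoint_left]
  rintro _ ⟨e, rfl⟩ ⟨e', he'⟩
  exact (Sym2.disjoint_range_map h).ne_of_mem ⟨e.1, rfl⟩ ⟨e'.1, rfl⟩
    (congrArg Subtype.val he'.symm)

lemma finite_setOf_eq_of_piecewise_affine {f g : ℝ → ℝ} {S T : Set (ℝ × ℝ)}
    (hS : S.Finite) (hT : T.Finite) (hST : Disjoint S T)
    (hf : ∀ x, ∃ l ∈ S, f x = l.1 * x + l.2) (hg : ∀ x, ∃ l ∈ T, g x = l.1 * x + l.2) :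
    {x | f x = g x}.Finite := by
  refine (hS.biUnion fun l _ ↦ hT.biUnion fun l' _ ↦
    Set.Subsingleton.finite (s := {x | l.1 * x + l.2 = l'.1 * x + l'.2}) ?_).subset ?_
  · intro x hx y hy
    have hne : l ≠ l' := hST.ne_of_mem ‹_› ‹_›
    by_contra hxy
    have hslope : l.1 = l'.1 := by
      have : (l.1 - l'.1) * (x - y) = 0 := by simp only [mem_ofPred_eq] at hx hy; linarith
      exact sub_eq_zero.1 ((mul_eq_zero.1 this).resolve_right (sub_ne_zero.2 hxy))
    exact hne (Prod.ext hslope (by simp only [mem_ofPred_eq, hslope] at hx; linarith))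
  · intro x hx
    obtain ⟨l, hl, hfx⟩ := hf x
    obtain ⟨l', hl', hgx⟩ := hg x
    simp only [mem_iUnion, mem_ofPred_eq]
    exact ⟨l, hl, l', hl', hfx.symm.trans (hx.trans hgx)⟩

/-- The trapezoid over `[a, b]` with top at height `h` and sides of slope `±4h`, so of width
`1/4`. -/
def plateau (a b h x : ℝ) : ℝ := min h (4 * h * min (x - a) (b - x))

def plateauArc (a b h t : ℝ) : ℝ × ℝ := (a + t * (b - a), plateau a b h (a + t * (b - a)))

section Plateau

variable {a b h x : ℝ}

lemma plateau_le (a b h x : ℝ) : plateau a b h x ≤ h := min_le_left _ _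

lemma exists_plateau_eq_affine (a b h x : ℝ) :
    ∃ l ∈ ({(4 * h, -4 * h * a), (0, h), (-4 * h, 4 * h * b)} : Set (ℝ × ℝ)),
      plateau a b h x = l.1 * x + l.2 := by
  unfold plateau
  rcases min_choice h (4 * h * min (x - a) (b - x)) with hm | hm <;> rw [hm]
  · exact ⟨(0, h), by simp, by ring⟩
  rcases min_choice (x - a) (b - x) with hm' | hm' <;> rw [hm']
  · exact ⟨(4 * h, -4 * h * a), by simp, by ring⟩
  · exact ⟨(-4 * h, 4 * h * b), by simp, by ring⟩

lemma finite_setOf_plateau_eq {a' b' h' : ℝ} (hh : h ≠ h') (h0 : 0 < h) (h0' : 0 < h') :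
    {x | plateau a b h x = plateau a' b' h' x}.Finite := by
  refine finite_setOf_eq_of_piecewise_affine (toFinite _) (toFinite _) ?_
    (exists_plateau_eq_affine a b h) (exists_plateau_eq_affine a' b' h')
  rw [Set.disjoint_left]
  rintro l hl hl'
  simp only [Set.mem_insert_iff, Set.mem_singleton_iff] at hl hl'
  rcases hl with rfl | rfl | rfl <;> rcases hl' with hl' | hl' | hl' <;>
    simp only [Prod.ext_iff] at hl' <;> obtain ⟨h1, h2⟩ := hl' <;>
    exact hh (by linarith)

lemma exists_plateau_eq_mul_abs (hpos : 0 < plateau a b h x) (hlt : plateau a b h x < h) :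
    ∃ v ∈ ({a, b} : Set ℝ), plateau a b h x = 4 * h * |x - v| := by
  have h0 : 0 < h := hpos.trans hlt
  unfold plateau at *
  obtain hm | hm := min_choice h (4 * h * min (x - a) (b - x)) <;> rw [hm] at hpos hlt ⊢
  · exact absurd hlt (lt_irrefl h)
  have hm : 0 < min (x - a) (b - x) := pos_of_mul_pos_right hpos (by positivity)
  rcases min_choice (x - a) (b - x) with hm' | hm' <;> rw [hm'] at hm ⊢
  · exact ⟨a, by simp, by rw [abs_of_pos hm]⟩
  · exact ⟨b, by simp, by rw [abs_of_neg (by linarith), neg_sub]⟩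

lemma plateau_eq_height_of_eq {a b a' b' : ℕ} {h' : ℝ} (hh : h ≠ h')
    (hpos : 0 < plateau a b h x) (heq : plateau a b h x = plateau a' b' h' x) :
    plateau a b h x = h ∨ plateau a' b' h' x = h' := by
  by_contra! hne
  have hlt := (plateau_le _ _ _ _).lt_of_ne hne.1
  have hlt' := (plateau_le _ _ _ _).lt_of_ne hne.2
  obtain ⟨v, hv, hxv⟩ := exists_plateau_eq_mul_abs hpos hlt
  obtain ⟨v', hv', hxv'⟩ := exists_plateau_eq_mul_abs (heq ▸ hpos) hlt'
  have h0 : 0 < h := hpos.trans hlt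
  have h0' : 0 < h' := (heq ▸ hpos).trans hlt'
  have hnear : |x - v| < 1 / 4 := by nlinarith [abs_nonneg (x - v)]
  have hnear' : |x - v'| < 1 / 4 := by nlinarith [abs_nonneg (x - v')]
  -- both slanted sides end at the same vertex, since vertices lie at integer abscissae
  have hvv' : v = v' := by
    obtain ⟨m, rfl⟩ : ∃ m : ℕ, (m : ℝ) = v := by rcases hv with rfl | rfl <;> exact ⟨_, rfl⟩
    obtain ⟨m', rfl⟩ : ∃ m : ℕ, (m : ℝ) = v' := by rcases hv' with rfl | rfl <;> exact ⟨_, rfl⟩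
    have h1 : m < m' + 1 := by
      exact_mod_cast (by linarith [abs_lt.1 hnear, abs_lt.1 hnear'] : (m : ℝ) < m' + 1)
    have h2 : m' < m + 1 := by
      exact_mod_cast (by linarith [abs_lt.1 hnear, abs_lt.1 hnear'] : (m' : ℝ) < m + 1)
    rw [show m = m' by omega]
  subst hvv'
  have hx : 0 < |x - v| := pos_of_mul_pos_right (hxv ▸ hpos) (by positivity)
  exact hh (mul_right_cancel₀ hx.ne' (by linarith))

lemma not_three_plateau_eq {a₁ b₁ a₂ b₂ a₃ b₃ : ℕ} {h₁ h₂ h₃ : ℝ}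
    (h₁₂ : h₁ ≠ h₂) (h₂₃ : h₂ ≠ h₃) (h₁₃ : h₁ ≠ h₃) (hpos : 0 < plateau a₁ b₁ h₁ x)
    (e₁₂ : plateau a₁ b₁ h₁ x = plateau a₂ b₂ h₂ x)
    (e₂₃ : plateau a₂ b₂ h₂ x = plateau a₃ b₃ h₃ x) : False := by
  have := plateau_eq_height_of_eq h₁₂ hpos e₁₂
  have := plateau_eq_height_of_eq h₁₃ hpos (e₁₂.trans e₂₃)
  have := plateau_eq_height_of_eq h₂₃ (e₁₂ ▸ hpos) e₂₃
  grind

lemma continuous_plateauArc (a b h : ℝ) : Continuous (plateauArc a b h) := by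
  unfold plateauArc plateau
  fun_prop

lemma plateauArc_injective (hab : a ≠ b) : Function.Injective (plateauArc a b h) := by
  intro t u htu
  have := congrArg Prod.fst htu
  simp only [plateauArc, add_right_inj] at this
  exact mul_right_cancel₀ (sub_ne_zero.2 hab.symm) this

lemma plateauArc_zero (hab : a ≤ b) (h0 : 0 ≤ h) : plateauArc a b h 0 = (a, 0) := by
  simp [plateauArc, plateau, hab, h0]

lemma plateauArc_one (hab : a ≤ b) (h0 : 0 ≤ h) : plateauArc a b h 1 = (b, 0) := by
  simp [plateauArc, plateau, hab, h0]

lemma snd_plateauArc_pos {t : ℝ} (hab : a < b) (h0 : 0 < h) (ht : t ∈ Ioo 0 1) :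
    0 < (plateauArc a b h t).2 := by
  obtain ⟨ht0, ht1⟩ := ht
  have : 0 < min (t * (b - a)) ((1 - t) * (b - a)) :=
    lt_min (mul_pos ht0 (sub_pos.2 hab)) (mul_pos (sub_pos.2 ht1) (sub_pos.2 hab))
  simp only [plateauArc, plateau, lt_min_iff]
  constructor
  · exact h0
  · convert mul_pos (mul_pos four_pos h0) this using 3 <;> ring

lemma snd_eq_plateau_of_mem_range {p : ℝ × ℝ} (hp : p ∈ range (plateauArc a b h)) :
    p.2 = plateau a b h p.1 := by
  obtain ⟨t, rfl⟩ := hp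
  rfl

lemma finite_range_plateauArc_inter_range {a' b' h' : ℝ} (hh : h ≠ h') (h0 : 0 < h)
    (h0' : 0 < h') : (range (plateauArc a b h) ∩ range (plateauArc a' b' h')).Finite := by
  have hfin : {x | plateau a b h x = plateau a' b' h' x}.Finite := finite_setOf_plateau_eq hh h0 h0'
  refine (hfin.image fun x ↦ (x, plateau a b h x)).subset ?_
  rintro p ⟨hp, hp'⟩
  refine ⟨p.1, ?_, ?_⟩
  · simp only [mem_ofPred_eq]
    rw [← snd_eq_plateau_of_mem_range hp, ← snd_eq_plateau_of_mem_range hp']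
  · exact Prod.ext rfl (snd_eq_plateau_of_mem_range hp).symm

end Plateau

namespace Drawing

variable {V W : Type*} {G : SimpleGraph V} {H : SimpleGraph W}

theorem nonempty_of_countable [Countable V] (G : SimpleGraph V) :
    Nonempty (Drawing G) := by
  obtain ⟨ι, hι⟩ := Countable.exists_injective_nat V
  obtain ⟨η, hη⟩ := Countable.exists_injective_nat G.edgeSet
  choose lo hi hlohi using fun e : G.edgeSet ↦
    Sym2.exists_eq_mk_lt hι (G.not_isDiag_of_mem_edgeSet e.2)
  have hab (e) : ((ι (lo e) : ℕ) : ℝ) < ι (hi e) := by exact_mod_cast (hlohi e).2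
  have hh (e) : (0 : ℝ) < η e + 1 := by positivity
  have hhne {e f} (hef : e ≠ f) : (η e + 1 : ℝ) ≠ η f + 1 := by simpa using hη.ne hef
  refine ⟨{
    pos v := ((ι v : ℝ), 0)
    pos_inj u v huv := hι (by simpa using congrArg Prod.fst huv)
    curve e := plateauArc (ι (lo e)) (ι (hi e)) (η e + 1)
    curve_cont e := (continuous_plateauArc ..).continuousOn
    curve_inj e := (plateauArc_injective (hab e).ne).injOn
    curve_ends e := ⟨lo e, hi e, (hlohi e).1, plateauArc_zero (hab e).le (hh e).le,
      plateauArc_one (hab e).le (hh e).le⟩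
    curve_avoid := by
      rintro e t ht ⟨v, hv⟩
      have := snd_plateauArc_pos (hab e) (hh e) ht
      rw [← hv] at this
      exact lt_irrefl _ this
    curve_finite_inter e f hef :=
      (finite_range_plateauArc_inter_range (hhne hef) (hh e) (hh f)).subset
        (inter_subset_inter (image_subset_range ..) (image_subset_range ..))
    no_triple_point := by
      rintro e f g hef hfg heg p ⟨⟨t, ht, rfl⟩, hf, hg⟩
      have hf' := snd_eq_plateau_of_mem_range (image_subset_range _ _ hf)
      have hg' := snd_eq_plateau_of_mem_range (image_subset_range _ _ hg)
      exact not_three_plateau_eq (hhne hef) (hhne hfg) (hhne heg)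
        (snd_plateauArc_pos (hab e) (hh e) ht) hf' (hf'.symm.trans hg') }⟩

def comap (D : Drawing G) (φ : H ↪g G) : Drawing H where
  pos := D.pos ∘ φ
  pos_inj := D.pos_inj.comp φ.injective
  curve e := D.curve (φ.mapEdgeSet e)
  curve_cont _ := D.curve_cont _
  curve_inj _ := D.curve_inj _
  curve_ends e := by
    obtain ⟨u, v, huv, h0, h1⟩ := D.curve_ends (φ.mapEdgeSet e)
    obtain ⟨u', v', he, rfl, rfl⟩ := Sym2.exists_eq_mk_of_map_eq_mk huv
    exact ⟨u', v', he, h0, h1⟩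
  curve_avoid e t ht := fun ⟨v, hv⟩ ↦ D.curve_avoid _ t ht ⟨φ v, hv⟩
  curve_finite_inter _ _ hef := D.curve_finite_inter _ _ (φ.mapEdgeSet.injective.ne hef)
  no_triple_point _ _ _ hef hfg heg := D.no_triple_point _ _ _
    (φ.mapEdgeSet.injective.ne hef) (φ.mapEdgeSet.injective.ne hfg) (φ.mapEdgeSet.injective.ne heg)

lemma image_crossingPairs_comap_subset (D : Drawing G) (φ : H ↪g G) :
    Sym2.map φ.mapEdgeSet '' (D.comap φ).crossingPairs ⊆ D.crossingPairs := by
  rintro _ ⟨_, ⟨e, f, hef, rfl, p, hp⟩, rfl⟩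
  exact ⟨_, _, φ.mapEdgeSet.injective.ne hef, rfl, p, hp⟩

lemma numCrossingPairs_comap (D : Drawing G) (φ : H ↪g G) :
    (D.comap φ).numCrossingPairs = (Sym2.map φ.mapEdgeSet '' (D.comap φ).crossingPairs).ncard :=
  (ncard_image_of_injective _ (Sym2.map.injective φ.mapEdgeSet.injective)).symm

lemma pcrNum_le_numCrossingPairs (D : Drawing G) : pcrNum G ≤ D.numCrossingPairs :=
  Nat.sInf_le ⟨D, rfl⟩

lemma exists_numCrossingPairs_eq_pcrNum [Countable V] (G : SimpleGraph V) :
    ∃ D : Drawing G, D.numCrossingPairs = pcrNum G :=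
  Nat.sInf_mem (s := {n | ∃ D : Drawing G, D.numCrossingPairs = n})
    ⟨_, (nonempty_of_countable G).some, rfl⟩

theorem sum_pcrNum_induce_le [Finite V] {ι : Type*} [Fintype ι] (D : Drawing G)
    {P : ι → Set V} (hP : Pairwise (Disjoint on P)) :
    ∑ i, pcrNum (G.induce (P i)) ≤ D.numCrossingPairs := by
  set A : ι → Set (Sym2 G.edgeSet) := fun i ↦ Sym2.map (Embedding.induce (P i)).mapEdgeSet ''
    (D.comap (Embedding.induce (P i))).crossingPairs
  have range_induce (s : Set V) : range (Embedding.induce (G := G) s) = s := Subtype.range_coe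
  have hA : Pairwise (Disjoint on A) := fun i j hij ↦
    (Sym2.disjoint_range_map (Embedding.disjoint_range_mapEdgeSet
      (by rw [range_induce, range_induce]; exact hP hij))).mono
      (image_subset_range _ _) (image_subset_range _ _)
  calc ∑ i, pcrNum (G.induce (P i))
      ≤ ∑ i, (A i).ncard := Finset.sum_le_sum fun i _ ↦
        ((D.comap _).pcrNum_le_numCrossingPairs).trans (D.numCrossingPairs_comap _).le
    _ = (⋃ i, A i).ncard := by
        rw [ncard_iUnion_of_finite (fun _ ↦ toFinite _) hA, finsum_eq_sum_of_fintype]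
    _ ≤ D.numCrossingPairs :=
        ncard_le_ncard (iUnion_subset fun i ↦ D.image_crossingPairs_comap_subset _) (toFinite _)

end Drawing

section Degrees

variable {V : Type*} [Finite V] (G : SimpleGraph V)

lemma ncard_neighborSet_induce_le (s : Set V) (v : s) :
    ((G.induce s).neighborSet v).ncard ≤ (G.neighborSet v).ncard :=
  ncard_le_ncard_of_injOn Subtype.val (fun _ hw ↦ hw) Subtype.val_injective.injOn

lemma bds_induce_le (s : Set V) :
    bds (G.induce s) ≤ ∑ᶠ v ∈ s, ((G.neighborSet v).ncard).choose 2 := by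
  rw [← finsum_set_coe_eq_finsum_mem]
  exact finsum_le_finsum' (toFinite _) (toFinite _) fun v ↦
    Nat.choose_le_choose 2 (ncard_neighborSet_induce_le G s v)

theorem sum_bds_induce_le {ι : Type*} [Fintype ι] {P : ι → Set V}
    (hP : Pairwise (Disjoint on P)) : ∑ i, bds (G.induce (P i)) ≤ bds G := by
  calc ∑ i, bds (G.induce (P i))
      ≤ ∑ i, ∑ᶠ v ∈ P i, ((G.neighborSet v).ncard).choose 2 :=
        Finset.sum_le_sum fun i _ ↦ bds_induce_le G (P i)
    _ = ∑ᶠ v ∈ ⋃ i, P i, ((G.neighborSet v).ncard).choose 2 := by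
        rw [finsum_mem_iUnion hP fun _ ↦ toFinite _, finsum_eq_sum_of_fintype]
    _ ≤ bds G := by
        rw [finsum_mem_def]
        exact finsum_le_finsum' (toFinite _) (toFinite _) (indicator_le_self _ _)

end Degrees

theorem sum_pcr_bds_le_general (n k : ℕ) (G : SimpleGraph (Fin n)) (P : Fin k → Set (Fin n))
    (hdisj : ∀ i j, i ≠ j → Disjoint (P i) (P j)) :
    ∑ i : Fin k, (pcrNum (G.induce (P i)) + bds (G.induce (P i)))
      ≤ pcrNum G + bds G := by
  obtain ⟨D, hD⟩ := Drawing.exists_numCrossingPairs_eq_pcrNum G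
  rw [Finset.sum_add_distrib, ← hD]
  exact add_le_add (D.sum_pcrNum_induce_le hdisj) (sum_bds_induce_le G hdisj)

/-- If `V = V₁ ⊔ … ⊔ V_k` is a partition of the vertex set of `G` and `G_i = G[V_i]`, then
`Σ_i (pcr(G_i) + bds(G_i)) ≤ pcr(G) + bds(G)`. -/
theorem sum_pcr_bds_le (n k : ℕ) (G : SimpleGraph (Fin n)) (P : Fin k → Set (Fin n))
    (hdisj : ∀ i j, i ≠ j → Disjoint (P i) (P j))
    (hcover : (⋃ i, P i) = Set.univ) :
    ∑ i : Fin k, (pcrNum (G.induce (P i)) + bds (G.induce (P i)))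
      ≤ pcrNum G + bds G :=
  sum_pcr_bds_le_general n k G P hdisj
end

section
/- Let k ≥ 3 and let P_1, P_2, …, P_k be nonempty finite sets of points in the plane whose union is in general position, such that (P_1, …, P_k) has same-type transversals and the convex hulls of P_1, …, P_k are pairwise disjoint. Then every straight line in the plane intersects the convex hulls of at most two of the sets P_1, …, P_k. -/
/-!
Write `orientDet p q r` for the determinant whose sign is `orient p q r`. Same-type transversals
give a fixed sign `σ = orient` on all of `P i × P j × P l` for `i < j < l`, and general position
together with the disjointness of the hulls makes `σ ≠ 0`. Since `σ * orientDet` is affine in each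
argument, its positivity passes from the points to their convex hulls, one argument at a time. But
a line meeting three hulls gives a collinear triple `u, v, w` in them, where `orientDet u v w = 0`.
-/

/-- The orientation (±1, or 0 for degenerate triples) of an ordered triple of points in the
plane. -/
noncomputable def orient (p q r : ℝ × ℝ) : ℝ :=
  Real.sign ((q.1 - p.1) * (r.2 - p.2) - (q.2 - p.2) * (r.1 - p.1))

/-- A set of points in the plane is in general position if no three of its points are
collinear. -/
def InGeneralPosition (S : Set (ℝ × ℝ)) : Prop :=
  ∀ p ∈ S, ∀ q ∈ S, ∀ r ∈ S, p ≠ q → p ≠ r → q ≠ r →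
    ¬ Collinear ℝ ({p, q, r} : Set (ℝ × ℝ))

/-- `(P 0, …, P (k−1))` has same-type transversals: any two transversals have the same order
type, i.e. every triple of indices receives the same orientation in all transversals. -/
def SameTypeTransversals {k : ℕ} (P : Fin k → Finset (ℝ × ℝ)) : Prop :=
  ∀ f g : Fin k → ℝ × ℝ, (∀ i, f i ∈ P i) → (∀ i, g i ∈ P i) →
    ∀ i j l : Fin k, i < j → j < l →
      orient (f i) (f j) (f l) = orient (g i) (g j) (g l)

def orientDet (p q r : ℝ × ℝ) : ℝ :=
  (q.1 - p.1) * (r.2 - p.2) - (q.2 - p.2) * (r.1 - p.1)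

theorem orient_eq_sign_orientDet (p q r : ℝ × ℝ) : orient p q r = Real.sign (orientDet p q r) :=
  rfl

theorem orientDet_rotate (p q r : ℝ × ℝ) : orientDet p q r = orientDet q r p := by
  simp only [orientDet]; ring

theorem orientDet_add_smul_left {a b : ℝ} (hab : a + b = 1) (x y q r : ℝ × ℝ) :
    orientDet (a • x + b • y) q r = a * orientDet x q r + b * orientDet y q r := by
  obtain rfl : b = 1 - a := by linarith
  simp only [orientDet, Prod.fst_add, Prod.snd_add, Prod.smul_fst, Prod.smul_snd, smul_eq_mul]
  ring

theorem Collinear.orientDet_eq_zero {p q r : ℝ × ℝ} (h : Collinear ℝ ({p, q, r} : Set (ℝ × ℝ))) :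
    orientDet p q r = 0 := by
  obtain ⟨v, hv⟩ := (collinear_iff_of_mem (Set.mem_insert p _)).1 h
  obtain ⟨s, rfl⟩ := hv q (by simp)
  obtain ⟨t, rfl⟩ := hv r (by simp)
  simp only [orientDet, vadd_eq_add, Prod.fst_add, Prod.snd_add, Prod.smul_fst, Prod.smul_snd,
    smul_eq_mul]
  ring

theorem collinear_of_orientDet_eq_zero {p q r : ℝ × ℝ} (h : orientDet p q r = 0) :
    Collinear ℝ ({p, q, r} : Set (ℝ × ℝ)) := by
  rcases eq_or_ne q p with rfl | hqp
  · simpa using collinear_pair ℝ q r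
  refine (collinear_iff_of_mem (Set.mem_insert p _)).2 ⟨q - p, ?_⟩
  simp only [Set.mem_insert_iff, Set.mem_singleton_iff, forall_eq_or_imp, forall_eq]
  refine ⟨⟨0, by simp⟩, ⟨1, by simp⟩, ?_⟩
  have hqp' : q.1 - p.1 ≠ 0 ∨ q.2 - p.2 ≠ 0 := by
    by_contra! hc
    exact hqp (Prod.ext (sub_eq_zero.1 hc.1) (sub_eq_zero.1 hc.2))
  simp only [orientDet] at h
  rcases hqp' with h1 | h2
  · refine ⟨(r.1 - p.1) / (q.1 - p.1), Prod.ext ?_ ?_⟩ <;>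
      simp only [vadd_eq_add, Prod.fst_add, Prod.snd_add, Prod.smul_fst, Prod.smul_snd,
        Prod.fst_sub, Prod.snd_sub, smul_eq_mul] <;> field_simp
    · ring
    · linear_combination h
  · refine ⟨(r.2 - p.2) / (q.2 - p.2), Prod.ext ?_ ?_⟩ <;>
      simp only [vadd_eq_add, Prod.fst_add, Prod.snd_add, Prod.smul_fst, Prod.smul_snd,
        Prod.fst_sub, Prod.snd_sub, smul_eq_mul] <;> field_simp
    · linear_combination -h
    · ring

theorem convex_setOf_mul_orientDet_pos (s : ℝ) (q r : ℝ × ℝ) :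
    Convex ℝ {x | 0 < s * orientDet x q r} := by
  intro x hx y hy a b ha hb hab
  simp only [Set.mem_ofPred_eq, orientDet_add_smul_left hab] at *
  rcases ha.eq_or_lt with rfl | ha
  · obtain rfl : b = 1 := by linarith
    simpa using hy
  · nlinarith [mul_pos ha hx, mul_nonneg hb hy.le]

theorem Set.exists_lt_lt_of_two_lt_ncard {α : Type*} [LinearOrder α] {S : Set α}
    (h : 2 < S.ncard) : ∃ i ∈ S, ∃ j ∈ S, ∃ l ∈ S, i < j ∧ j < l := by
  have hS : S.Finite := Set.finite_of_ncard_pos (by omega)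
  obtain ⟨t, hts, htc⟩ := Finset.exists_subset_card_eq (s := hS.toFinset) (n := 3)
    (by rwa [← Set.ncard_eq_toFinset_card S hS])
  have mem (m : Fin 3) : t.orderEmbOfFin htc m ∈ S :=
    hS.mem_toFinset.1 (hts (t.orderEmbOfFin_mem htc m))
  exact ⟨_, mem 0, _, mem 1, _, mem 2, (t.orderEmbOfFin htc).strictMono (by decide),
    (t.orderEmbOfFin htc).strictMono (by decide)⟩

theorem mul_orientDet_pos_of_mem_convexHull_left {s : ℝ} {A : Set (ℝ × ℝ)} {q r : ℝ × ℝ}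
    (h : ∀ p ∈ A, 0 < s * orientDet p q r) {u : ℝ × ℝ} (hu : u ∈ convexHull ℝ A) :
    0 < s * orientDet u q r :=
  convexHull_min h (convex_setOf_mul_orientDet_pos s q r) hu

theorem mul_orientDet_pos_of_mem_convexHull {s : ℝ} {A B C : Set (ℝ × ℝ)}
    (h : ∀ p ∈ A, ∀ q ∈ B, ∀ r ∈ C, 0 < s * orientDet p q r) {u v w : ℝ × ℝ}
    (hu : u ∈ convexHull ℝ A) (hv : v ∈ convexHull ℝ B) (hw : w ∈ convexHull ℝ C) :
    0 < s * orientDet u v w := by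
  have huqr : ∀ q ∈ B, ∀ r ∈ C, 0 < s * orientDet q r u := fun q hq r hr => by
    rw [← orientDet_rotate u q r]
    exact mul_orientDet_pos_of_mem_convexHull_left (fun p hp => h p hp q hq r hr) hu
  have huvr : ∀ r ∈ C, 0 < s * orientDet r u v := fun r hr => by
    rw [← orientDet_rotate v r u]
    exact mul_orientDet_pos_of_mem_convexHull_left (fun q hq => huqr q hq r hr) hv
  rw [← orientDet_rotate w u v]
  exact mul_orientDet_pos_of_mem_convexHull_left huvr hw

theorem InGeneralPosition.orientDet_ne_zero {S : Set (ℝ × ℝ)} (hS : InGeneralPosition S)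
    {p q r : ℝ × ℝ} (hp : p ∈ S) (hq : q ∈ S) (hr : r ∈ S) (hpq : p ≠ q) (hpr : p ≠ r)
    (hqr : q ≠ r) : orientDet p q r ≠ 0 :=
  fun h => hS p hp q hq r hr hpq hpr hqr (collinear_of_orientDet_eq_zero h)

theorem SameTypeTransversals.orient_eq {k : ℕ} {P : Fin k → Finset (ℝ × ℝ)}
    (hP : SameTypeTransversals P) {g : Fin k → ℝ × ℝ} (hg : ∀ m, g m ∈ P m) {i j l : Fin k}
    (hij : i < j) (hjl : j < l) {p q r : ℝ × ℝ} (hp : p ∈ P i) (hq : q ∈ P j) (hr : r ∈ P l) :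
    orient p q r = orient (g i) (g j) (g l) := by
  set f := Function.update (Function.update (Function.update g i p) j q) l r
  have hf : ∀ m, f m ∈ P m := by
    intro m
    simp only [f, Function.update_apply]
    split_ifs with hl hj hi
    exacts [hl ▸ hr, hj ▸ hq, hi ▸ hp, hg m]
  simpa [f, hij.ne, hjl.ne, (hij.trans hjl).ne] using hP f g hf hg i j l hij hjl

theorem line_meets_at_most_two_hulls_general (k : ℕ) (P : Fin k → Finset (ℝ × ℝ))
    (hne : ∀ i, (P i).Nonempty)
    (hgen : InGeneralPosition (⋃ i, (P i : Set (ℝ × ℝ))))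
    (hst : SameTypeTransversals P)
    (hdisj : ∀ i j, i ≠ j →
      Disjoint (convexHull ℝ (P i : Set (ℝ × ℝ))) (convexHull ℝ (P j : Set (ℝ × ℝ)))) :
    ∀ a b : ℝ × ℝ, a ≠ b →
      ({i : Fin k | ((affineSpan ℝ ({a, b} : Set (ℝ × ℝ)) : Set (ℝ × ℝ))
          ∩ convexHull ℝ (P i : Set (ℝ × ℝ))).Nonempty}).ncard ≤ 2 := by
  intro a b _
  by_contra! hcard
  obtain ⟨i, ⟨u, huL, huH⟩, j, ⟨v, hvL, hvH⟩, l, ⟨w, hwL, hwH⟩, hij, hjl⟩ :=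
    Set.exists_lt_lt_of_two_lt_ncard hcard
  choose g hg using hne
  have hdistinct {m n : Fin k} (hmn : m < n) : g m ≠ g n :=
    (hdisj m n hmn.ne).ne_of_mem (subset_convexHull ℝ _ (hg m)) (subset_convexHull ℝ _ (hg n))
  have hσ : orient (g i) (g j) (g l) ≠ 0 := by
    rw [orient_eq_sign_orientDet, Ne, Real.sign_eq_zero_iff]
    exact hgen.orientDet_ne_zero (Set.mem_iUnion_of_mem i (hg i)) (Set.mem_iUnion_of_mem j (hg j))
      (Set.mem_iUnion_of_mem l (hg l)) (hdistinct hij) (hdistinct (hij.trans hjl)) (hdistinct hjl)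
  have hpos : ∀ p ∈ (P i : Set (ℝ × ℝ)), ∀ q ∈ (P j : Set (ℝ × ℝ)), ∀ r ∈ (P l : Set (ℝ × ℝ)),
      0 < orient (g i) (g j) (g l) * orientDet p q r := by
    intro p hp q hq r hr
    rw [← hst.orient_eq hg hij hjl hp hq hr] at hσ ⊢
    exact Real.sign_mul_pos_of_ne_zero _ (mt Real.sign_eq_zero_iff.2 hσ)
  have hcol := (collinear_triple_of_mem_affineSpan_pair huL hvL hwL).orientDet_eq_zero
  simpa [hcol] using mul_orientDet_pos_of_mem_convexHull hpos huH hvH hwH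

/-- If `(P 1, …, P k)` (with `k ≥ 3`) has same-type transversals and the convex hulls of the
`P i` are pairwise disjoint, then every straight line intersects at most two of the convex
hulls. -/
theorem line_meets_at_most_two_hulls (k : ℕ) (hk : 3 ≤ k) (P : Fin k → Finset (ℝ × ℝ))
    (hne : ∀ i, (P i).Nonempty)
    (hgen : InGeneralPosition (⋃ i, (P i : Set (ℝ × ℝ))))
    (hst : SameTypeTransversals P)
    (hdisj : ∀ i j, i ≠ j →
      Disjoint (convexHull ℝ (P i : Set (ℝ × ℝ))) (convexHull ℝ (P j : Set (ℝ × ℝ)))) :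
    ∀ a b : ℝ × ℝ, a ≠ b →
      ({i : Fin k | ((affineSpan ℝ ({a, b} : Set (ℝ × ℝ)) : Set (ℝ × ℝ))
          ∩ convexHull ℝ (P i : Set (ℝ × ℝ))).Nonempty}).ncard ≤ 2 :=
  line_meets_at_most_two_hulls_general k P hne hgen hst hdisj
end
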